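/- arXiv:2512.23013 — 2 statements merged into one kernel-verified Lean document; each statement's English description precedes it below -/
import Mathlib

section
/- Let 𝒢 = {(x,0,x,0,…,x,0) mod d : x ∈ ℤ_d} ⊆ ℤ_d^{2n}, the subgroup generated by g = (1,0,1,0,…,1,0). Then 𝒢 is a totally isotropic subgroup of order d, and the set A_𝒢 = {a ∈ ℤ_d^{2n} : (2a mod d) ∈ 𝒢 and a ∈ 𝒢^⊥} has cardinality |A_𝒢| = d if d is odd, and |A_𝒢| = d·4^{n−1} if d is even. -/
open scoped BigOperators
open Matrix

noncomputable section

namespace MagicGap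

/-- `ω = exp(2πi/d)`. -/
def omega (d : ℕ) : ℂ := Complex.exp (2 * Real.pi * Complex.I / d)

/-- `τ = −exp(iπ/d)`. -/
def tau (d : ℕ) : ℂ := -Complex.exp (Real.pi * Complex.I / d)

/-- Single-qudit displacement operator `D_(a₁,a₂) = τ^{a₁a₂} X^{a₁} Z^{a₂}`,
as a `d × d` matrix: its `(j,k)` entry is `τ^{a₁a₂} ω^{a₂ k} δ_{j, k+a₁ mod d}`. -/
def D1 (d : ℕ) (a : ℤ × ℤ) : Matrix (Fin d) (Fin d) ℂ := fun j k =>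
  tau d ^ (a.1 * a.2) * omega d ^ (a.2 * ((k : ℕ) : ℤ)) *
    (if ((j : ℕ) : ZMod d) = ((k : ℕ) : ZMod d) + (a.1 : ZMod d) then 1 else 0)

/-- Multi-qudit displacement operator on `(ℂ^d)^{⊗n}`, the tensor product of
single-qudit displacement operators. -/
def D (d n : ℕ) (a : Fin n → ℤ × ℤ) :
    Matrix (Fin n → Fin d) (Fin n → Fin d) ℂ := fun j k =>
  ∏ i, D1 d (a i) (j i) (k i)

/-- The symplectic form `[a,b] = Σᵢ (a_{2i} b_{2i−1} − a_{2i−1} b_{2i})`. -/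
def symp {n : ℕ} (a b : Fin n → ℤ × ℤ) : ℤ :=
  ∑ i, ((a i).2 * (b i).1 - (a i).1 * (b i).2)

/-- Standard representatives `{0,…,d−1}^{2n} ⊂ ℤ^{2n}` of `ℤ_d^{2n}`. -/
abbrev Reps (d n : ℕ) := Fin n → Fin d × Fin d

/-- View a representative as an integer vector. -/
def toZ {d n : ℕ} (a : Reps d n) : Fin n → ℤ × ℤ :=
  fun i => ((((a i).1 : ℕ) : ℤ), (((a i).2 : ℕ) : ℤ))

/-- The group `ℤ_d^{2n}`. -/
abbrev PS (d n : ℕ) := Fin n → ZMod d × ZMod d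

/-- Standard representative in `{0,…,d−1}^{2n} ⊂ ℤ^{2n}` of an element of `ℤ_d^{2n}`. -/
def repz {d n : ℕ} (a : PS d n) : Fin n → ℤ × ℤ :=
  fun i => (((a i).1.val : ℤ), ((a i).2.val : ℤ))

/-- Fourfold tensor product `A ⊗ B ⊗ C ⊗ E` of operators on `H^{⊗4}`. -/
def tens4 {I : Type*} (A B C E : Matrix I I ℂ) :
    Matrix (Fin 4 → I) (Fin 4 → I) ℂ := fun j k =>
  A (j 0) (k 0) * B (j 1) (k 1) * C (j 2) (k 2) * E (j 3) (k 3)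

/-- `A^{⊗4}`. -/
def pow4 {I : Type*} (A : Matrix I I ℂ) : Matrix (Fin 4 → I) (Fin 4 → I) ℂ :=
  tens4 A A A A

/-- `Q = d^{−2n} Σ_{a∈ℤ_d^{2n}} D_a ⊗ D_a† ⊗ D_a ⊗ D_a†`. -/
def Q (d n : ℕ) : Matrix (Fin 4 → (Fin n → Fin d)) (Fin 4 → (Fin n → Fin d)) ℂ :=
  ((d : ℂ) ^ (2 * n))⁻¹ •
    ∑ a : Reps d n,
      tens4 (D d n (toZ a)) (D d n (toZ a))ᴴ (D d n (toZ a)) (D d n (toZ a))ᴴ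

/-- The unitary `T_π` permuting the four tensor factors of `H^{⊗4}`. -/
def permOp (I : Type*) [DecidableEq I] (π : Equiv.Perm (Fin 4)) :
    Matrix (Fin 4 → I) (Fin 4 → I) ℂ := fun j k =>
  if ∀ m, j m = k (π m) then 1 else 0

/-- `Π_{sym⁴} = (1/24) Σ_{π∈S₄} T_π`, the projector onto the symmetric subspace
of `H^{⊗4}`. -/
def piSym4 (I : Type*) [DecidableEq I] : Matrix (Fin 4 → I) (Fin 4 → I) ℂ :=
  (24 : ℂ)⁻¹ • ∑ π : Equiv.Perm (Fin 4), permOp I π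

/-- A totally isotropic subgroup of `ℤ_d^{2n}`: all pairwise symplectic products
vanish mod `d`. -/
def IsIsotropic (d n : ℕ) (S : AddSubgroup (PS d n)) : Prop :=
  ∀ a ∈ S, ∀ b ∈ S, ((symp (repz a) (repz b) : ℤ) : ZMod d) = 0

open Classical in
/-- Stabilizer projector with trivial homomorphism: `Π_𝒮 = |𝒮|⁻¹ Σ_{a∈𝒮} D_a`. -/
def stabProj (d n : ℕ) [NeZero d] (S : AddSubgroup (PS d n)) :
    Matrix (Fin n → Fin d) (Fin n → Fin d) ℂ :=
  (Nat.card S : ℂ)⁻¹ • ∑ a : PS d n, if a ∈ S then D d n (repz a) else 0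

/-- `𝒮^⊥ = {a : [a,b] ≡ 0 (mod d) for all b ∈ 𝒮}`. -/
def perp (d n : ℕ) (S : AddSubgroup (PS d n)) : Set (PS d n) :=
  {a | ∀ b ∈ S, ((symp (repz a) (repz b) : ℤ) : ZMod d) = 0}

/-- `A_𝒮 = {a ∈ ℤ_d^{2n} : 2a mod d ∈ 𝒮 and a ∈ 𝒮^⊥}`. -/
def ASet (d n : ℕ) (S : AddSubgroup (PS d n)) : Set (PS d n) :=
  {a | 2 • a ∈ S ∧ a ∈ perp d n S}

/-- The average extrinsic stabilizer-entropy of the code space of `𝒮`: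
`1 − d_B · C(d_S+3,4)⁻¹ · Tr(Q Π_𝒮^{⊗4} Π_{sym⁴})`. -/
def gapBigTerm (d n : ℕ) [NeZero d] (S : AddSubgroup (PS d n)) (dS : ℕ) : ℂ :=
  1 - (d : ℂ) ^ n * ((Nat.choose (dS + 3) 4 : ℕ) : ℂ)⁻¹ *
    trace (Q d n * pow4 (stabProj d n S) * piSym4 (Fin n → Fin d))

/-- The average intrinsic stabilizer entropy of a single qudit `ℂ^{d_S}`:
`1 − d_S · C(d_S+3,4)⁻¹ · Tr(Q_S Π^S_{sym⁴})`. -/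
def smallTermQudit (dS : ℕ) : ℂ :=
  1 - (dS : ℂ) * ((Nat.choose (dS + 3) 4 : ℕ) : ℂ)⁻¹ *
    trace (Q dS 1 * piSym4 (Fin 1 → Fin dS))

/-- The average intrinsic stabilizer entropy of `m` qubits `(ℂ²)^{⊗m}`:
`1 − 2^m · C(2^m+3,4)⁻¹ · Tr(Q_S Π^S_{sym⁴})`. -/
def smallTermQubits (m : ℕ) : ℂ :=
  1 - (2 : ℂ) ^ m * ((Nat.choose (2 ^ m + 3) 4 : ℕ) : ℂ)⁻¹ *
    trace (Q 2 m * piSym4 (Fin m → Fin 2))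

/-- The generator `g = (1,0,1,0,…,1,0) ∈ ℤ_d^{2n}`. -/
def gvec (d n : ℕ) : PS d n := fun _ => (1, 0)

section AuxMagicGap

lemma mem_zmultiples_gvec (d n : ℕ) [NeZero d] (a : PS d n) :
    a ∈ AddSubgroup.zmultiples (gvec d n) ↔ ∃ x : ZMod d, a = fun _ => (x, 0) := by
  rw [AddSubgroup.mem_zmultiples_iff]
  constructor
  · rintro ⟨k, rfl⟩
    refine ⟨(k : ZMod d), funext fun i => ?_⟩
    ext <;> simp [gvec, zsmul_eq_mul]
  · rintro ⟨x, rfl⟩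
    refine ⟨(x.val : ℤ), funext fun i => ?_⟩
    ext <;> simp [gvec, zsmul_eq_mul, ZMod.natCast_val, ZMod.cast_id]

lemma symp_repz_cast (d n : ℕ) [NeZero d] (a b : PS d n) :
    ((symp (repz a) (repz b) : ℤ) : ZMod d)
      = ∑ i, ((a i).2 * (b i).1 - (a i).1 * (b i).2) := by
  unfold symp repz
  push_cast [ZMod.natCast_val, ZMod.cast_id]
  rfl

lemma perp_gvec_iff (d n : ℕ) [NeZero d] (a : PS d n) :
    a ∈ perp d n (AddSubgroup.zmultiples (gvec d n)) ↔ (∑ i, (a i).2) = 0 := by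
  constructor
  · intro h
    have h1 : (fun _ => ((1 : ZMod d), (0 : ZMod d))) ∈ AddSubgroup.zmultiples (gvec d n) :=
      (mem_zmultiples_gvec d n _).mpr ⟨1, rfl⟩
    have := h _ h1
    rw [symp_repz_cast] at this
    simpa using this
  · intro h b hb
    obtain ⟨x, rfl⟩ := (mem_zmultiples_gvec d n b).mp hb
    rw [symp_repz_cast]
    simp [← Finset.sum_mul, h]

lemma two_smul_pair (d : ℕ) (p : ZMod d × ZMod d) : (2 : ℕ) • p = (2 * p.1, 2 * p.2) := by
  ext <;> simp [nsmul_eq_mul]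

lemma aset_gvec_iff (d n : ℕ) [NeZero d] (hn : 1 ≤ n) (a : PS d n) :
    a ∈ ASet d n (AddSubgroup.zmultiples (gvec d n)) ↔
      ((∀ i, 2 * (a i).1 = 2 * (a ⟨0, hn⟩).1) ∧ (∀ i, 2 * (a i).2 = 0) ∧ (∑ i, (a i).2) = 0) := by
  constructor
  · rintro ⟨hm, hp⟩
    obtain ⟨x, hx⟩ := (mem_zmultiples_gvec d n _).mp hm
    have key : ∀ i, 2 * (a i).1 = x ∧ 2 * (a i).2 = 0 := by
      intro i
      have := congrFun hx i
      rw [Pi.smul_apply, two_smul_pair] at this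
      exact ⟨(Prod.ext_iff.mp this).1, (Prod.ext_iff.mp this).2⟩
    exact ⟨fun i => by rw [(key i).1, (key ⟨0, hn⟩).1], fun i => (key i).2,
      (perp_gvec_iff d n a).mp hp⟩
  · rintro ⟨h1, h2, hs⟩
    refine ⟨(mem_zmultiples_gvec d n _).mpr ⟨2 * (a ⟨0, hn⟩).1, funext fun i => ?_⟩,
      (perp_gvec_iff d n a).mpr hs⟩
    rw [Pi.smul_apply, two_smul_pair, h1 i, h2 i]

lemma range_xzero_ncard (d n : ℕ) [NeZero d] (hn : 1 ≤ n) :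
    ({a : PS d n | ∃ x : ZMod d, a = fun _ => (x, 0)}).ncard = d := by
  have hinj : Function.Injective (fun x : ZMod d => (fun _ => (x, 0) : PS d n)) := by
    intro x y h
    have := congrFun h ⟨0, hn⟩
    exact (Prod.ext_iff.mp this).1
  have hset : {a : PS d n | ∃ x : ZMod d, a = fun _ => (x, 0)}
      = Set.range (fun x : ZMod d => (fun _ => (x, 0) : PS d n)) := by
    ext a; simp [Set.range, eq_comm]
  rw [hset, ← Nat.card_coe_set_eq, Nat.card_range_of_injective hinj,
    Nat.card_eq_fintype_card, ZMod.card]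

lemma card_two_torsion (d : ℕ) [NeZero d] (hd2 : 2 ≤ d) (hd : Even d) :
    Nat.card {t : ZMod d // 2 * t = 0} = 2 := by
  obtain ⟨m, hm⟩ := hd
  have hm' : d = 2 * m := by omega
  have hm0 : 0 < m := by omega
  have hmd : m < d := by omega
  have hmne : ((m : ℕ) : ZMod d) ≠ 0 := by
    rw [Ne, ZMod.natCast_eq_zero_iff]
    intro hdvd
    exact absurd (Nat.le_of_dvd hm0 hdvd) (by omega)
  have hm2 : 2 * ((m : ℕ) : ZMod d) = 0 := by
    have : (((2 * m : ℕ)) : ZMod d) = 0 := by rw [← hm']; exact ZMod.natCast_self d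
    push_cast at this
    exact this
  have e : Bool ≃ {t : ZMod d // 2 * t = 0} := by
    refine ⟨fun b => if b then ⟨(m : ZMod d), hm2⟩ else ⟨0, by ring⟩,
      fun t => decide (t.1 ≠ 0), ?_, ?_⟩
    · intro b
      cases b <;> simp [hmne]
    · rintro ⟨t, ht⟩
      have hdvd : d ∣ 2 * t.val := by
        rw [← ZMod.natCast_eq_zero_iff]
        push_cast
        rw [ZMod.natCast_val, ZMod.cast_id]
        exact ht
      have hdvd2 : 2 * m ∣ 2 * t.val := by rw [← hm']; exact hdvd
      have hmdvd : m ∣ t.val := (Nat.mul_dvd_mul_iff_left (by norm_num : 0 < 2)).mp hdvd2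
      have hvlt : t.val < 2 * m := hm' ▸ ZMod.val_lt t
      obtain ⟨c, hc⟩ := hmdvd
      have hc2 : c = 0 ∨ c = 1 := by
        rcases Nat.lt_or_ge c 2 with h | h
        · omega
        · exfalso; nlinarith
      have htv : t = ((t.val : ℕ) : ZMod d) := by
        rw [ZMod.natCast_val, ZMod.cast_id]
      rcases hc2 with h | h
      · have ht0 : t = 0 := by rw [htv, hc, h]; simp
        simp [ht0]
      · have htm : t = ((m : ℕ) : ZMod d) := by rw [htv, hc, h]; simp
        subst htm
        simp [hmne]
  rw [← Nat.card_congr e, Nat.card_eq_fintype_card, Fintype.card_bool]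

lemma sum_split_ne {M : Type*} [AddCommMonoid M] {n : ℕ} (i0 : Fin n) (f : Fin n → M) :
    ∑ i, f i = f i0 + ∑ j : {i : Fin n // i ≠ i0}, f j.1 := by
  rw [Fintype.sum_eq_add_sum_compl i0, Finset.sum_subtype (p := fun b => b ≠ i0) ({i0}ᶜ) (by simp) f]

lemma card_sumzero (d n : ℕ) [NeZero d] (hn : 1 ≤ n) (hd2 : 2 ≤ d) (hd : Even d) :
    Nat.card {g : Fin n → ZMod d // (∀ i, 2 * g i = 0) ∧ (∑ i, g i) = 0} = 2 ^ (n - 1) := by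
  set i0 : Fin n := ⟨0, hn⟩ with hi0
  have e : {g : Fin n → ZMod d // (∀ i, 2 * g i = 0) ∧ (∑ i, g i) = 0}
      ≃ ({i : Fin n // i ≠ i0} → {t : ZMod d // 2 * t = 0}) := by
    refine ⟨fun g i => ⟨g.1 i.1, g.2.1 i.1⟩,
      fun v => ⟨fun i => if h : i = i0 then -(∑ j : {i : Fin n // i ≠ i0}, (v j).1)
        else (v ⟨i, h⟩).1, ?_, ?_⟩, ?_, ?_⟩
    · intro i
      by_cases h : i = i0
      · simp only [dif_pos h, mul_neg, neg_eq_zero, Finset.mul_sum]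
        exact Finset.sum_eq_zero fun j _ => (v j).2
      · simp only [dif_neg h]
        exact (v ⟨i, h⟩).2
    · rw [sum_split_ne i0]
      have h1 : ∀ j : {i : Fin n // i ≠ i0},
          (if h : j.1 = i0 then -(∑ j : {i : Fin n // i ≠ i0}, (v j).1)
            else (v ⟨j.1, h⟩).1) = (v j).1 := fun j => by simp only [dif_neg j.2]
      rw [Finset.sum_congr rfl (fun j _ => h1 j)]
      simp
    · intro g
      apply Subtype.ext; funext i
      show (if h : i = i0 then -(∑ j : {i : Fin n // i ≠ i0}, g.1 j.1) else g.1 i) = g.1 i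
      by_cases h : i = i0
      · rw [dif_pos h, h]
        have hs := g.2.2
        rw [sum_split_ne i0] at hs
        exact neg_eq_of_add_eq_zero_left hs
      · rw [dif_neg h]
    · intro v
      funext i
      apply Subtype.ext
      show (if h : i.1 = i0 then -(∑ j : {i : Fin n // i ≠ i0}, (v j).1)
          else (v ⟨i.1, h⟩).1) = (v i).1
      rw [dif_neg i.2]
  rw [Nat.card_congr e, Nat.card_fun, card_two_torsion d hd2 hd]
  have hcard : Nat.card {i : Fin n // i ≠ i0} = n - 1 := by
    rw [Nat.card_eq_fintype_card]
    simp [Fintype.card_subtype_compl]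
  rw [hcard]

lemma card_constdouble (d n : ℕ) [NeZero d] (hn : 1 ≤ n) (hd2 : 2 ≤ d) (hd : Even d) :
    Nat.card {f : Fin n → ZMod d // ∀ i, 2 * f i = 2 * f ⟨0, hn⟩} = d * 2 ^ (n - 1) := by
  set i0 : Fin n := ⟨0, hn⟩ with hi0
  have e : {f : Fin n → ZMod d // ∀ i, 2 * f i = 2 * f i0}
      ≃ ZMod d × ({i : Fin n // i ≠ i0} → {t : ZMod d // 2 * t = 0}) := by
    refine ⟨fun f => (f.1 i0, fun i => ⟨f.1 i.1 - f.1 i0, by rw [mul_sub, f.2 i.1, sub_self]⟩),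
      fun p => ⟨fun i => if h : i = i0 then p.1 else p.1 + (p.2 ⟨i, h⟩).1, ?_⟩, ?_, ?_⟩
    · intro i
      show 2 * (if h : i = i0 then p.1 else p.1 + (p.2 ⟨i, h⟩).1)
        = 2 * (if h : i0 = i0 then p.1 else p.1 + (p.2 ⟨i0, h⟩).1)
      rw [dif_pos rfl]
      by_cases h : i = i0
      · rw [dif_pos h]
      · rw [dif_neg h, mul_add, (p.2 ⟨i, h⟩).2, add_zero]
    · intro f
      apply Subtype.ext; funext i
      show (if h : i = i0 then f.1 i0 else f.1 i0 + (f.1 i - f.1 i0)) = f.1 i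
      by_cases h : i = i0
      · rw [dif_pos h, h]
      · rw [dif_neg h]; ring
    · intro p
      have h1 : (if h : i0 = i0 then p.1 else p.1 + (p.2 ⟨i0, h⟩).1) = p.1 := dif_pos rfl
      refine Prod.ext h1 ?_
      funext i
      apply Subtype.ext
      show (if h : i.1 = i0 then p.1 else p.1 + (p.2 ⟨i.1, h⟩).1)
          - (if h : i0 = i0 then p.1 else p.1 + (p.2 ⟨i0, h⟩).1) = (p.2 i).1
      rw [dif_pos rfl, dif_neg i.2]
      ring
  rw [Nat.card_congr e, Nat.card_prod, Nat.card_eq_fintype_card (α := ZMod d), ZMod.card,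
    Nat.card_fun, card_two_torsion d hd2 hd]
  have hcard : Nat.card {i : Fin n // i ≠ i0} = n - 1 := by
    rw [Nat.card_eq_fintype_card]
    simp [Fintype.card_subtype_compl]
  rw [hcard]

lemma aset_odd_eq (d n : ℕ) [NeZero d] (hn : 1 ≤ n) (hd : Odd d) :
    ASet d n (AddSubgroup.zmultiples (gvec d n))
      = {a : PS d n | ∃ x : ZMod d, a = fun _ => (x, 0)} := by
  have hu : IsUnit (2 : ZMod d) := by
    have := (ZMod.isUnit_iff_coprime 2 d).mpr (Nat.coprime_two_left.mpr hd)
    simpa using this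
  ext a
  rw [Set.mem_setOf_eq, show (a ∈ ASet d n (AddSubgroup.zmultiples (gvec d n))) ↔ _ from
    aset_gvec_iff d n hn a]
  constructor
  · rintro ⟨h1, h2, hs⟩
    refine ⟨(a ⟨0, hn⟩).1, funext fun i => ?_⟩
    have e1 : (a i).1 = (a ⟨0, hn⟩).1 := hu.mul_left_cancel (h1 i)
    have e2 : (a i).2 = 0 := hu.mul_left_cancel (by rw [h2 i, mul_zero])
    exact Prod.ext e1 e2
  · rintro ⟨x, rfl⟩
    exact ⟨fun i => rfl, fun i => by simp, by simp⟩

end AuxMagicGap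

/-- The subgroup `𝒢` generated by `g = (1,0,…,1,0)` consists of the
vectors `(x,0,…,x,0)`, is totally isotropic of order `d`, and the set `A_𝒢` has
cardinality `d` if `d` is odd and `d·4^{n−1}` if `d` is even. -/
theorem gauge_subgroup_card
    (d n : ℕ) [NeZero d] (hd : 2 ≤ d) (hn : 1 ≤ n) :
    ((AddSubgroup.zmultiples (gvec d n) : AddSubgroup (PS d n)) : Set (PS d n)) =
        {a : PS d n | ∃ x : ZMod d, a = fun _ => (x, 0)} ∧
    IsIsotropic d n (AddSubgroup.zmultiples (gvec d n)) ∧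
    Nat.card (AddSubgroup.zmultiples (gvec d n)) = d ∧
    (Odd d → (ASet d n (AddSubgroup.zmultiples (gvec d n))).ncard = d) ∧
    (Even d → (ASet d n (AddSubgroup.zmultiples (gvec d n))).ncard = d * 4 ^ (n - 1)) := by
  refine ⟨?_, ?_, ?_, ?_, ?_⟩
  · ext a
    simp only [SetLike.mem_coe, Set.mem_setOf_eq]
    exact mem_zmultiples_gvec d n a
  · intro a ha b hb
    obtain ⟨x, rfl⟩ := (mem_zmultiples_gvec d n a).mp ha
    obtain ⟨y, rfl⟩ := (mem_zmultiples_gvec d n b).mp hb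
    rw [symp_repz_cast]
    simp
  · have e : (AddSubgroup.zmultiples (gvec d n)) ≃ ZMod d := by
      refine ⟨fun s => (s.1 ⟨0, hn⟩).1,
        fun x => ⟨fun _ => (x, 0), (mem_zmultiples_gvec d n _).mpr ⟨x, rfl⟩⟩, ?_, fun x => rfl⟩
      intro s
      apply Subtype.ext
      obtain ⟨x, hx⟩ := (mem_zmultiples_gvec d n s.1).mp s.2
      funext j
      simp only [hx]
    rw [Nat.card_congr e, Nat.card_eq_fintype_card, ZMod.card]
  · intro hodd
    rw [aset_odd_eq d n hn hodd]
    exact range_xzero_ncard d n hn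
  · intro heven
    have hA : ASet d n (AddSubgroup.zmultiples (gvec d n))
        = {a : PS d n | (∀ i, 2 * (a i).1 = 2 * (a ⟨0, hn⟩).1) ∧ (∀ i, 2 * (a i).2 = 0)
            ∧ (∑ i, (a i).2) = 0} := by
      ext a
      exact aset_gvec_iff d n hn a
    rw [hA]
    have hcoe : ({a : PS d n | (∀ i, 2 * (a i).1 = 2 * (a ⟨0, hn⟩).1) ∧ (∀ i, 2 * (a i).2 = 0)
            ∧ (∑ i, (a i).2) = 0} : Set (PS d n)).ncard
        = Nat.card {a : PS d n // (∀ i, 2 * (a i).1 = 2 * (a ⟨0, hn⟩).1) ∧ (∀ i, 2 * (a i).2 = 0)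
            ∧ (∑ i, (a i).2) = 0} := by
      rw [← Nat.card_coe_set_eq]
      rfl
    rw [hcoe]
    have e : {a : PS d n // (∀ i, 2 * (a i).1 = 2 * (a ⟨0, hn⟩).1) ∧ (∀ i, 2 * (a i).2 = 0)
            ∧ (∑ i, (a i).2) = 0}
        ≃ {f : Fin n → ZMod d // ∀ i, 2 * f i = 2 * f ⟨0, hn⟩}
          × {g : Fin n → ZMod d // (∀ i, 2 * g i = 0) ∧ (∑ i, g i) = 0} :=
      ⟨fun a => (⟨fun i => (a.1 i).1, a.2.1⟩, ⟨fun i => (a.1 i).2, a.2.2.1, a.2.2.2⟩),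
       fun fg => ⟨fun i => (fg.1.1 i, fg.2.1 i), fg.1.2, fg.2.2.1, fg.2.2.2⟩,
       fun a => Subtype.ext rfl,
       fun fg => Prod.ext (Subtype.ext rfl) (Subtype.ext rfl)⟩
    rw [Nat.card_congr e, Nat.card_prod, card_constdouble d n hn hd heven,
      card_sumzero d n hn hd heven, mul_assoc, ← mul_pow]
    norm_num
end MagicGap
end
end

section
/- Let ψ = |ψ⟩⟨ψ| be a pure state on (ℂ^d)^{⊗n} and suppose ψ = Σ_{i=1}^k x_i σ_i is a finite decomposition with x_i ∈ ℝ and each σ_i a stabilizer state. Then Σ_{a∈ℤ_d^{2n}} |Tr(D_a† ψ)|⁴ ≥ d^n / (Σ_{i=1}^k |x_i|)². Equivalently, the robustness of magic 𝓡(ψ) satisfies 𝓡(ψ)² ≥ 1/(1 − M(ψ)), where M(ψ) = 1 − d^{−n} Σ_{a∈ℤ_d^{2n}} |Tr(D_a† ψ)|⁴ is the linear (2-Tsallis) stabilizer entropy. -/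
open scoped BigOperators
open Matrix

noncomputable section

namespace MagicGap

open Classical in
/-- A stabilizer state on `(ℂ^d)^{⊗n}`: a rank-one orthogonal projector of the form
`σ = d^{−n} Σ_{a∈𝒮} ω^{f(a)} D_a` for a totally isotropic subgroup `𝒮 ⊆ ℤ_d^{2n}`
of order `d^n` and a group homomorphism `f : 𝒮 → ℤ_d`. -/
def IsStabilizerState (d n : ℕ) [NeZero d]
    (σ : Matrix (Fin n → Fin d) (Fin n → Fin d) ℂ) : Prop :=
  σ * σ = σ ∧ σᴴ = σ ∧ σ.rank = 1 ∧
  ∃ (S : AddSubgroup (PS d n)) (f : PS d n → ZMod d),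
    IsIsotropic d n S ∧ Nat.card S = d ^ n ∧
    (∀ a ∈ S, ∀ b ∈ S, f (a + b) = f a + f b) ∧
    σ = ((d : ℂ) ^ n)⁻¹ •
      ∑ a : PS d n, if a ∈ S then omega d ^ (f a).val • D d n (repz a) else 0

/-!
Write `χ(a) = Tr(D_a† ψ)`. The displacement operators are orthogonal for the Hilbert–Schmidt
product, each of squared norm `d^n`, and there are `d^{2n}` of them; so for a pure state
Parseval gives `Σ_a |χ(a)|² = d^n`. A stabilizer state has `|χ|` equal to the indicator of its
group of order `d^n`, hence `ψ = Σ xᵢ σᵢ` gives `Σ_a |χ(a)| ≤ d^n Σ |xᵢ|`. Hölder's inequality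
`(Σ|χ|²)³ ≤ (Σ|χ|)² Σ|χ|⁴` then yields `d^{3n} ≤ d^{2n} (Σ |xᵢ|)² Σ|χ|⁴`.
-/

open ComplexConjugate

lemma norm_omega (d : ℕ) : ‖omega d‖ = 1 := by
  rw [omega, show 2 * Real.pi * Complex.I / d = ((2 * Real.pi / d : ℝ) : ℂ) * Complex.I by
    push_cast; ring, Complex.norm_exp_ofReal_mul_I]

lemma norm_tau (d : ℕ) : ‖tau d‖ = 1 := by
  rw [tau, norm_neg, show Real.pi * Complex.I / d = ((Real.pi / d : ℝ) : ℂ) * Complex.I by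
    push_cast; ring, Complex.norm_exp_ofReal_mul_I]

lemma zpow_mul_conj_zpow {z : ℂ} (hz : ‖z‖ = 1) (u v : ℤ) :
    z ^ u * conj (z ^ v) = z ^ (u - v) := by
  have hz0 : z ≠ 0 := norm_ne_zero_iff.mp (by simp [hz])
  rw [map_zpow₀, ← Complex.inv_eq_conj hz, _root_.inv_zpow', ← zpow_add₀ hz0, sub_eq_add_neg]

lemma natCast_eq_natCast_add_natCast_iff {d : ℕ} [NeZero d] (x y c : Fin d) :
    ((x : ℕ) : ZMod d) = ((y : ℕ) : ZMod d) + ((c : ℕ) : ZMod d) ↔ x = y + c := by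
  rw [← Nat.cast_add, ZMod.natCast_eq_natCast_iff', Fin.ext_iff, Fin.val_add,
    Nat.mod_eq_of_lt x.isLt]

lemma sum_omega_zpow_mul_sub {d : ℕ} [NeZero d] (y y' : Fin d) :
    ∑ t : Fin d, omega d ^ (((t : ℕ) : ℤ) * (((y : ℕ) : ℤ) - ((y' : ℕ) : ℤ)))
      = if y = y' then (d : ℂ) else 0 := by
  have hω : IsPrimitiveRoot (omega d) d := Complex.isPrimitiveRoot_exp d (NeZero.ne d)
  have hω0 : omega d ≠ 0 := hω.ne_zero (NeZero.ne d)
  set z := omega d ^ (((y : ℕ) : ℤ) - ((y' : ℕ) : ℤ)) with hz_def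
  have hpow : ∀ t : Fin d, omega d ^ (((t : ℕ) : ℤ) * (((y : ℕ) : ℤ) - ((y' : ℕ) : ℤ)))
      = z ^ (t : ℕ) := fun t => by rw [mul_comm, _root_.zpow_mul, zpow_natCast]
  rw [Finset.sum_congr rfl fun t _ => hpow t, Fin.sum_univ_eq_sum_range (z ^ ·)]
  have hz : z = 1 ↔ y = y' := by
    rw [hz_def, zpow_sub₀ hω0, div_eq_one_iff_eq (zpow_ne_zero _ hω0), zpow_natCast, zpow_natCast,
      Fin.ext_iff]
    exact ⟨hω.pow_inj y.isLt y'.isLt, fun h => h ▸ rfl⟩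
  split_ifs with h
  · simp [hz.mpr h]
  · have hzd : z ^ d = 1 := by
      rw [← zpow_natCast, ← _root_.zpow_mul, mul_comm, _root_.zpow_mul, zpow_natCast,
        hω.pow_eq_one, _root_.one_zpow]
    rw [geom_sum_eq (mt hz.mp h), hzd, sub_self, zero_div]

lemma D1_mul_conj_D1 {d : ℕ} [NeZero d] (c₁ c₂ x y x' y' : Fin d) :
    D1 d ((c₁ : ℕ), (c₂ : ℕ)) x y * conj (D1 d ((c₁ : ℕ), (c₂ : ℕ)) x' y') =
      omega d ^ (((c₂ : ℕ) : ℤ) * (((y : ℕ) : ℤ) - ((y' : ℕ) : ℤ))) *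
        ((if x = y + c₁ then 1 else 0) * (if x' = y' + c₁ then 1 else 0)) := by
  simp only [D1, map_mul, Int.cast_natCast, natCast_eq_natCast_add_natCast_iff, apply_ite conj,
    map_one, map_zero]
  rw [show ∀ a b c e f g : ℂ, a * b * c * (e * f * g) = a * e * (b * f) * (c * g) by
      intros; ring,
    zpow_mul_conj_zpow (norm_tau d), zpow_mul_conj_zpow (norm_omega d), sub_self, zpow_zero,
    one_mul, mul_sub]

lemma sum_D1_mul_conj_D1 {d : ℕ} [NeZero d] (x y x' y' : Fin d) :
    ∑ c : Fin d × Fin d,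
        D1 d ((c.1 : ℕ), (c.2 : ℕ)) x y * conj (D1 d ((c.1 : ℕ), (c.2 : ℕ)) x' y')
      = if x = x' ∧ y = y' then (d : ℂ) else 0 := by
  rw [Fintype.sum_prod_type]
  simp only [D1_mul_conj_D1, ← Finset.sum_mul, sum_omega_zpow_mul_sub]
  by_cases hy : y = y'
  · subst hy
    have hc : ∀ c : Fin d, (x = y + c) ↔ c = x - y := fun c => by
      rw [eq_sub_iff_add_eq', eq_comm]
    simp only [hc, ite_mul, one_mul, zero_mul, if_true, and_true]
    rw [← Finset.mul_sum, Finset.sum_ite_eq', if_pos (Finset.mem_univ _), add_sub_cancel, mul_ite,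
      mul_one, mul_zero]
    exact if_congr eq_comm rfl rfl
  · simp [hy]

lemma sum_D_mul_conj_D {d : ℕ} [NeZero d] (n : ℕ) (j k j' k' : Fin n → Fin d) :
    ∑ a : Reps d n, D d n (toZ a) j k * conj (D d n (toZ a) j' k')
      = if j = j' ∧ k = k' then (d : ℂ) ^ n else 0 := by
  simp only [D, toZ, map_prod, ← Finset.prod_mul_distrib]
  rw [← Fintype.prod_sum (fun i (c : Fin d × Fin d) =>
    D1 d ((c.1 : ℕ), (c.2 : ℕ)) (j i) (k i) * conj (D1 d ((c.1 : ℕ), (c.2 : ℕ)) (j' i) (k' i)))]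
  simp only [sum_D1_mul_conj_D1, Finset.prod_ite_zero, Finset.prod_const, Finset.card_univ,
    Fintype.card_fin, Finset.mem_univ, forall_const, forall_and, funext_iff]

lemma ofReal_sum_norm_sq {n : Type*} [Fintype n] (w : n → ℂ) :
    ((∑ i, ‖w i‖ ^ 2 : ℝ) : ℂ) = star w ⬝ᵥ w := by
  simp [dotProduct, Complex.conj_mul']

lemma sum_norm_sq_mulVec {m n : Type*} [Fintype m] [Fintype n] [DecidableEq n]
    (A : Matrix m n ℂ) (c : ℝ) (hA : Aᴴ * A = (c : ℂ) • 1) (v : n → ℂ) :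
    ∑ i, ‖(A *ᵥ v) i‖ ^ 2 = c * ∑ j, ‖v j‖ ^ 2 := by
  apply Complex.ofReal_injective
  rw [Complex.ofReal_mul, ofReal_sum_norm_sq, ofReal_sum_norm_sq, star_mulVec,
    ← dotProduct_mulVec, mulVec_mulVec, hA, smul_mulVec, one_mulVec, dotProduct_smul, smul_eq_mul]

lemma mul_conjTranspose_eq_smul_one {m n : Type*} [Fintype m] [Fintype n] [DecidableEq m]
    [DecidableEq n] (e : m ≃ n) {A : Matrix m n ℂ} {c : ℂ} (hc : c ≠ 0) (hA : Aᴴ * A = c • 1) :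
    A * Aᴴ = c • 1 := by
  have h : (c⁻¹ • Aᴴ) * A = 1 := by rw [smul_mul, hA, smul_smul, inv_mul_cancel₀ hc, one_smul]
  rw [← (mul_eq_one_comm_of_equiv e).mpr h, Matrix.mul_smul, smul_smul, mul_inv_cancel₀ hc,
    one_smul]

lemma sum_sq_pow_three_le {ι : Type*} (s : Finset ι) {u : ι → ℝ} (hu : ∀ i ∈ s, 0 ≤ u i) :
    (∑ i ∈ s, u i ^ 2) ^ 3 ≤ (∑ i ∈ s, u i) ^ 2 * ∑ i ∈ s, u i ^ 4 := by
  set A := ∑ i ∈ s, u i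
  set B := ∑ i ∈ s, u i ^ 2
  set T := ∑ i ∈ s, u i ^ 3
  set C := ∑ i ∈ s, u i ^ 4
  have hAT : B ^ 2 ≤ A * T := Finset.sum_sq_le_sum_mul_sum_of_sq_le_mul s hu
    (fun i hi => pow_nonneg (hu i hi) 3) fun i _ => le_of_eq (by ring)
  have hTC : T ^ 2 ≤ B * C := Finset.sum_sq_le_sum_mul_sum_of_sq_le_mul s
    (fun i hi => pow_nonneg (hu i hi) 2) (fun i hi => pow_nonneg (hu i hi) 4)
    fun i _ => le_of_eq (by ring)
  have hB : 0 ≤ B := Finset.sum_nonneg fun i hi => pow_nonneg (hu i hi) 2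
  rcases hB.eq_or_lt with hB0 | hBpos
  · rw [← hB0, zero_pow three_ne_zero]
    exact mul_nonneg (sq_nonneg A) (Finset.sum_nonneg fun i hi => pow_nonneg (hu i hi) 4)
  · refine le_of_mul_le_mul_right ?_ hBpos
    calc B ^ 3 * B = (B ^ 2) ^ 2 := by ring
      _ ≤ (A * T) ^ 2 := pow_le_pow_left₀ (sq_nonneg B) hAT 2
      _ = A ^ 2 * T ^ 2 := by ring
      _ ≤ A ^ 2 * (B * C) := mul_le_mul_of_nonneg_left hTC (sq_nonneg A)
      _ = A ^ 2 * C * B := by ring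

lemma le_sq_mul_sum_pow_four {ι : Type*} (s : Finset ι) {u : ι → ℝ} (hu : ∀ i ∈ s, 0 ≤ u i)
    {R N : ℝ} (hN : 0 < N) (hL2 : ∑ i ∈ s, u i ^ 2 = N) (hL1 : ∑ i ∈ s, u i ≤ R * N) :
    N ≤ R ^ 2 * ∑ i ∈ s, u i ^ 4 := by
  have hL1sq := pow_le_pow_left₀ (Finset.sum_nonneg hu) hL1 2
  have hC := Finset.sum_nonneg fun i hi => pow_nonneg (hu i hi) 4
  refine le_of_mul_le_mul_left ?_ (pow_pos hN 2)
  calc N ^ 2 * N = (∑ i ∈ s, u i ^ 2) ^ 3 := by rw [hL2]; ring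
    _ ≤ (∑ i ∈ s, u i) ^ 2 * ∑ i ∈ s, u i ^ 4 := sum_sq_pow_three_le s hu
    _ ≤ (R * N) ^ 2 * ∑ i ∈ s, u i ^ 4 := mul_le_mul_of_nonneg_right hL1sq hC
    _ = N ^ 2 * (R ^ 2 * ∑ i ∈ s, u i ^ 4) := by ring

lemma sum_sum_norm_sq_of_pure {ι : Type*} [Fintype ι] {ψ : Matrix ι ι ℂ} {v : ι → ℂ}
    (hv : ∑ j, ‖v j‖ ^ 2 = 1) (hψ : ∀ j k, ψ j k = v j * star (v k)) :
    ∑ j, ∑ k, ‖ψ j k‖ ^ 2 = 1 := by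
  simp only [hψ, norm_mul, norm_star, mul_pow, ← Finset.mul_sum, hv, mul_one]

/-- Column `(k, j)` of row `a` is `conj (D_a)_{kj}`. The completeness relation of the displacement
operators says that the columns are orthogonal; the matrix being square, so are its rows, which is
the trace orthogonality `Tr(D_a† D_b) = d^n δ_{ab}`. -/
def dispRows (d n : ℕ) : Matrix (Reps d n) ((Fin n → Fin d) × (Fin n → Fin d)) ℂ :=
  fun a p => conj (D d n (toZ a) p.1 p.2)

def charFun (d n : ℕ) (M : Matrix (Fin n → Fin d) (Fin n → Fin d) ℂ) (a : Reps d n) : ℂ :=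
  trace ((D d n (toZ a))ᴴ * M)

def zmodEquivFin (d : ℕ) [NeZero d] : ZMod d ≃ Fin d where
  toFun z := ⟨z.val, z.val_lt⟩
  invFun c := (c : ℕ)
  left_inv := ZMod.natCast_zmod_val
  right_inv c := Fin.ext (ZMod.val_natCast_of_lt c.isLt)

def psEquivReps (d n : ℕ) [NeZero d] : PS d n ≃ Reps d n :=
  Equiv.piCongrRight fun _ => (zmodEquivFin d).prodCongr (zmodEquivFin d)

section CharFun

variable {d n : ℕ}

lemma charFun_smul (c : ℂ) (M : Matrix (Fin n → Fin d) (Fin n → Fin d) ℂ) (a : Reps d n) :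
    charFun d n (c • M) a = c * charFun d n M a := by
  simp only [charFun, Matrix.mul_smul, trace_smul, smul_eq_mul]

lemma charFun_sum {ι : Type*} (s : Finset ι) (M : ι → Matrix (Fin n → Fin d) (Fin n → Fin d) ℂ)
    (a : Reps d n) : charFun d n (∑ i ∈ s, M i) a = ∑ i ∈ s, charFun d n (M i) a := by
  simp only [charFun, Matrix.mul_sum, trace_sum]

lemma charFun_zero (a : Reps d n) : charFun d n 0 a = 0 := by
  simp only [charFun, Matrix.mul_zero, trace_zero]

lemma charFun_eq_dispRows_mulVec (M : Matrix (Fin n → Fin d) (Fin n → Fin d) ℂ) :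
    charFun d n M = dispRows d n *ᵥ fun p => M p.1 p.2 := by
  ext a
  simp only [charFun, trace, diag, mul_apply, conjTranspose_apply, mulVec, dotProduct, dispRows,
    Fintype.sum_prod_type, RCLike.star_def]
  exact Finset.sum_comm

variable [NeZero d]

lemma conjTranspose_dispRows_mul_self : (dispRows d n)ᴴ * dispRows d n = ((d : ℂ) ^ n) • 1 := by
  ext p q
  simp [dispRows, mul_apply, sum_D_mul_conj_D, one_apply, Prod.ext_iff]

lemma dispRows_mul_conjTranspose : dispRows d n * (dispRows d n)ᴴ = ((d : ℂ) ^ n) • 1 :=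
  mul_conjTranspose_eq_smul_one (Equiv.arrowProdEquivProdArrow _ _ _)
    (pow_ne_zero n (Nat.cast_ne_zero.mpr (NeZero.ne d))) conjTranspose_dispRows_mul_self

lemma charFun_D (a b : Reps d n) :
    charFun d n (D d n (toZ b)) a = if a = b then (d : ℂ) ^ n else 0 := by
  have h := congr_fun₂ (dispRows_mul_conjTranspose (d := d) (n := n)) a b
  simp only [mul_apply, conjTranspose_apply, dispRows, RCLike.star_def, Complex.conj_conj,
    Matrix.smul_apply, one_apply, smul_eq_mul, mul_ite, mul_one, mul_zero] at h
  rw [charFun_eq_dispRows_mulVec]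
  exact h

lemma sum_norm_sq_charFun (M : Matrix (Fin n → Fin d) (Fin n → Fin d) ℂ) :
    ∑ a, ‖charFun d n M a‖ ^ 2 = (d : ℝ) ^ n * ∑ j, ∑ k, ‖M j k‖ ^ 2 := by
  rw [charFun_eq_dispRows_mulVec, sum_norm_sq_mulVec _ ((d : ℝ) ^ n)
    (by push_cast; exact conjTranspose_dispRows_mul_self), Fintype.sum_prod_type]

lemma toZ_psEquivReps (b : PS d n) : toZ (psEquivReps d n b) = repz b := rfl

lemma charFun_stabilizer (S : AddSubgroup (PS d n)) [DecidablePred (· ∈ S)]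
    (f : PS d n → ZMod d) (a : Reps d n) :
    charFun d n (((d : ℂ) ^ n)⁻¹ •
        ∑ b : PS d n, if b ∈ S then omega d ^ (f b).val • D d n (repz b) else 0) a
      = if (psEquivReps d n).symm a ∈ S then omega d ^ (f ((psEquivReps d n).symm a)).val
        else 0 := by
  simp only [charFun_smul, charFun_sum, apply_ite (charFun d n · a), charFun_zero,
    ← toZ_psEquivReps, charFun_D, ← Equiv.symm_apply_eq]
  rw [Finset.sum_eq_single_of_mem ((psEquivReps d n).symm a) (Finset.mem_univ _)
    fun b _ hb => by simp [Ne.symm hb], if_pos rfl]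
  have hdn : (d : ℂ) ^ n ≠ 0 := pow_ne_zero n (Nat.cast_ne_zero.mpr (NeZero.ne d))
  split_ifs
  · rw [mul_comm, mul_inv_cancel_right₀ hdn]
  · rw [mul_zero]

lemma sum_norm_charFun_of_isStabilizerState {σ : Matrix (Fin n → Fin d) (Fin n → Fin d) ℂ}
    (hσ : IsStabilizerState d n σ) : ∑ a, ‖charFun d n σ a‖ = (d : ℝ) ^ n := by
  classical
  obtain ⟨-, -, -, S, f, -, hcard, -, rfl⟩ := hσ
  simp only [charFun_stabilizer, apply_ite norm, norm_pow, norm_omega, one_pow, norm_zero]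
  rw [(psEquivReps d n).symm.sum_comp fun b => if b ∈ S then (1 : ℝ) else 0, Finset.sum_boole,
    ← Fintype.card_subtype, ← Nat.card_eq_fintype_card, hcard, Nat.cast_pow]

lemma sum_norm_charFun_le {ι : Type*} [Fintype ι] (x : ι → ℝ)
    {σ : ι → Matrix (Fin n → Fin d) (Fin n → Fin d) ℂ} (hσ : ∀ i, IsStabilizerState d n (σ i)) :
    ∑ a, ‖charFun d n (∑ i, (x i : ℂ) • σ i) a‖ ≤ (∑ i, |x i|) * (d : ℝ) ^ n := by
  calc ∑ a, ‖charFun d n (∑ i, (x i : ℂ) • σ i) a‖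
      ≤ ∑ a, ∑ i, |x i| * ‖charFun d n (σ i) a‖ := by
        refine Finset.sum_le_sum fun a _ => ?_
        simp only [charFun_sum, charFun_smul]
        refine (norm_sum_le _ _).trans_eq ?_
        simp only [norm_mul, Complex.norm_real, Real.norm_eq_abs]
    _ = (∑ i, |x i|) * (d : ℝ) ^ n := by
        rw [Finset.sum_comm]
        simp only [← Finset.mul_sum, sum_norm_charFun_of_isStabilizerState (hσ _), Finset.sum_mul]

end CharFun

theorem robustness_lower_bound_from_linear_SE_general
    (d n : ℕ) [NeZero d]
    (ψ : Matrix (Fin n → Fin d) (Fin n → Fin d) ℂ)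
    (v : (Fin n → Fin d) → ℂ) (hv : ∑ j, ‖v j‖ ^ 2 = 1)
    (hψ : ∀ j k, ψ j k = v j * star (v k))
    (k : ℕ) (x : Fin k → ℝ)
    (σ : Fin k → Matrix (Fin n → Fin d) (Fin n → Fin d) ℂ)
    (hσ : ∀ i, IsStabilizerState d n (σ i))
    (hdecomp : ψ = ∑ i, (x i : ℂ) • σ i) :
    (∑ a : Reps d n, ‖trace ((D d n (toZ a))ᴴ * ψ)‖ ^ 4
        ≥ (d : ℝ) ^ n / (∑ i, |x i|) ^ 2) ∧
    (∑ i, |x i|) ^ 2 ≥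
      1 / (1 - (1 - ((d : ℝ) ^ n)⁻¹ *
        ∑ a : Reps d n, ‖trace ((D d n (toZ a))ᴴ * ψ)‖ ^ 4)) := by
  change ∑ a, ‖charFun d n ψ a‖ ^ 4 ≥ _ ∧ _ ≥ 1 / (1 - (1 - _ * ∑ a, ‖charFun d n ψ a‖ ^ 4))
  set R := ∑ i, |x i|
  set N := (d : ℝ) ^ n
  set C := ∑ a, ‖charFun d n ψ a‖ ^ 4
  have hN : 0 < N := pow_pos (Nat.cast_pos.mpr (NeZero.pos d)) n
  have hmain : N ≤ R ^ 2 * C :=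
    le_sq_mul_sum_pow_four Finset.univ (fun a _ => norm_nonneg _) hN
      (by rw [sum_norm_sq_charFun, sum_sum_norm_sq_of_pure hv hψ, mul_one])
      (hdecomp ▸ sum_norm_charFun_le x hσ)
  have hC0 : 0 ≤ C := Finset.sum_nonneg fun a _ => by positivity
  have hR : 0 < R ^ 2 := by nlinarith
  have hC : 0 < C := by nlinarith [sq_nonneg R]
  refine ⟨(div_le_iff₀ hR).mpr (by linarith), ?_⟩
  rw [sub_sub_cancel, ge_iff_le, one_div, mul_inv, inv_inv, ← div_eq_mul_inv, div_le_iff₀ hC]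
  exact hmain

/-- If a pure state `ψ = |ψ⟩⟨ψ|` decomposes as `ψ = Σᵢ xᵢ σᵢ` with
real `xᵢ` and stabilizer states `σᵢ`, then
`Σ_a |Tr(D_a† ψ)|⁴ ≥ d^n/(Σᵢ |xᵢ|)²`; equivalently
`(Σᵢ |xᵢ|)² ≥ 1/(1 − M(ψ))`, where `M(ψ) = 1 − d^{−n} Σ_a |Tr(D_a† ψ)|⁴` is the
linear (2-Tsallis) stabilizer entropy. -/
theorem robustness_lower_bound_from_linear_SE
    (d n : ℕ) [NeZero d] (hd : 2 ≤ d) (hn : 1 ≤ n)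
    (ψ : Matrix (Fin n → Fin d) (Fin n → Fin d) ℂ)
    (v : (Fin n → Fin d) → ℂ) (hv : ∑ j, ‖v j‖ ^ 2 = 1)
    (hψ : ∀ j k, ψ j k = v j * star (v k))
    (k : ℕ) (x : Fin k → ℝ)
    (σ : Fin k → Matrix (Fin n → Fin d) (Fin n → Fin d) ℂ)
    (hσ : ∀ i, IsStabilizerState d n (σ i))
    (hdecomp : ψ = ∑ i, (x i : ℂ) • σ i) :
    (∑ a : Reps d n, ‖trace ((D d n (toZ a))ᴴ * ψ)‖ ^ 4
        ≥ (d : ℝ) ^ n / (∑ i, |x i|) ^ 2) ∧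
    (∑ i, |x i|) ^ 2 ≥
      1 / (1 - (1 - ((d : ℝ) ^ n)⁻¹ *
        ∑ a : Reps d n, ‖trace ((D d n (toZ a))ᴴ * ψ)‖ ^ 4)) :=
  robustness_lower_bound_from_linear_SE_general d n ψ v hv hψ k x σ hσ hdecomp
end MagicGap
end
end
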